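/- Let (G,S) be a cube group of rank n ≥ 2. Then the action of G on S via the permutation representation j: G → Aut(S) is not transitive; equivalently, there exists a proper nonempty G-invariant subset T ⊊ S. -/

import Mathlib

/-- The graph on `ι → Bool` (the 1-skeleton of the `ι`-cube): two vertices are
adjacent iff they differ in exactly one coordinate. -/
def cubeGraph (ι : Type*) : SimpleGraph (ι → Bool) where
  Adj x y := ∃! i, x i ≠ y i
  symm := by
    constructor; rintro x y ⟨i, hi, hu⟩
    exact ⟨i, fun h => hi h.symm, fun j hj => hu j (fun h => hj h.symm)⟩
  loopless := by constructor; rintro x ⟨i, hi, -⟩; exact hi rfl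

/-- The Cayley graph of a group with respect to a set `S`. -/
def cayleyGraph {G : Type*} [Group G] (S : Set G) : SimpleGraph G where
  Adj x y := (x⁻¹ * y ∈ S ∨ y⁻¹ * x ∈ S) ∧ x ≠ y
  symm := by constructor; rintro x y ⟨h, hne⟩; exact ⟨h.symm, hne.symm⟩
  loopless := by constructor; rintro x ⟨-, h⟩; exact h rfl

/-- `(G, S)` is a cube group: `S` is a set of involutions generating `G`, and the
Cayley graph `Cay(G,S)` is isomorphic to the 1-skeleton of the `|S|`-cube. -/
def IsCubeGroup {G : Type*} [Group G] (S : Set G) : Prop :=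
  (∀ s ∈ S, s * s = 1 ∧ s ≠ 1) ∧ Subgroup.closure S = ⊤ ∧
    Nonempty (cayleyGraph S ≃g cubeGraph S)

theorem stmt_17 (G : Type*) [Group G] (S : Set G) (n : ℕ) (hn : 2 ≤ n)
    (hcard : Nat.card S = n) (hS : IsCubeGroup S)
    -- the permutation representation
    (j : G →* Equiv.Perm S)
    (hjfix : ∀ s : S, j (s : G) s = s)
    (hjtraj : ∀ s t : S, (s : G) * t * (j (t : G) s : G) *
      ((j ((j (t : G) s : S) : G) t : S) : G) = 1) :
    -- the action of `G` on `S` is not transitive: there is a proper nonempty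
    -- invariant subset
    ∃ T : Set S, T.Nonempty ∧ T ≠ Set.univ ∧ ∀ (g : G), ∀ t ∈ T, j g t ∈ T := by
  classical
  -- `S` is finite with at least two elements
  have hSfin : Finite S := Nat.finite_of_card_ne_zero (by omega)
  have hSnontriv : Nontrivial S := by
    rw [← Finite.one_lt_card_iff_nontrivial, hcard]; omega
  obtain ⟨s₀, x₀, hs₀x₀⟩ := hSnontriv
  -- `G` is a finite 2-group
  obtain ⟨e⟩ := hS.2.2
  have hGfin : Finite G := Finite.of_equiv _ e.toEquiv.symm
  have hGcard : Nat.card G = 2 ^ n := by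
    rw [Nat.card_congr e.toEquiv, Nat.card_fun, hcard, Nat.card_eq_fintype_card,
      Fintype.card_bool]
  have hpG : IsPGroup 2 G := IsPGroup.of_card hGcard
  have : Fact (Nat.Prime 2) := ⟨Nat.prime_two⟩
  have hnil : Group.IsNilpotent G := hpG.isNilpotent
  -- the orbit of `s₀`
  set T : Set S := {x | ∃ g : G, j g s₀ = x} with hT
  by_contra hcon
  push_neg at hcon
  have hTne : T.Nonempty := ⟨s₀, 1, by simp⟩
  have hTinv : ∀ (g : G), ∀ t ∈ T, j g t ∈ T := by
    rintro g t ⟨g', rfl⟩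
    exact ⟨g * g', by rw [map_mul]; rfl⟩
  -- by the contradiction hypothesis the orbit is everything
  have hTuniv : T = Set.univ := by
    by_contra hne
    obtain ⟨g, t, ht, hgt⟩ := hcon T hTne hne
    exact hgt (hTinv g t ht)
  have htrans : ∀ x : S, ∃ g : G, j g s₀ = x := fun x => by
    have : x ∈ T := hTuniv ▸ Set.mem_univ x
    exact this
  -- the stabilizer of `s₀`
  set K : Subgroup G :=
    { carrier := {g : G | j g s₀ = s₀}
      one_mem' := by simp
      mul_mem' := by
        intro a b ha hb
        simp only [Set.mem_setOf_eq, map_mul] at *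
        rw [Equiv.Perm.mul_apply, hb, ha]
      inv_mem' := by
        intro a ha
        simp only [Set.mem_setOf_eq] at *
        rw [map_inv]
        apply (j a).injective
        rw [Equiv.Perm.coe_inv, Equiv.apply_symm_apply, ha] } with hK
  have hKne : K ≠ ⊤ := by
    intro h
    obtain ⟨g, hg⟩ := htrans x₀
    have : g ∈ K := h ▸ Subgroup.mem_top g
    have : j g s₀ = s₀ := this
    exact hs₀x₀ (by rw [← hg, this])
  -- a proper normal subgroup `M` containing the stabilizer
  obtain ⟨M, hMco, hKM⟩ := (eq_top_or_exists_le_coatom K).resolve_left hKne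
  have hMnormal : M.Normal :=
    Subgroup.NormalizerCondition.normal_of_coatom M normalizerCondition_of_isNilpotent hMco
  -- every generator lies in `M`
  have hSM : ∀ s ∈ S, s ∈ M := by
    intro s hs
    obtain ⟨g, hg⟩ := htrans ⟨s, hs⟩
    have hmem : g⁻¹ * s * g ∈ K := by
      show j (g⁻¹ * s * g) s₀ = s₀
      have : j (g⁻¹ * s * g) s₀ = (j g)⁻¹ (j s (j g s₀)) := by
        rw [map_mul, map_mul, map_inv]; rfl
      rw [this, hg, hjfix ⟨s, hs⟩, ← hg]
      exact Equiv.symm_apply_apply _ _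
    have := hMnormal.conj_mem _ (hKM hmem) g
    simpa [mul_assoc] using this
  -- hence `G = closure S ≤ M`, contradicting properness of `M`
  have : (⊤ : Subgroup G) ≤ M := by
    rw [← hS.2.1]
    exact (Subgroup.closure_le M).2 hSM
  exact hMco.1 (top_le_iff.mp this)
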